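/- Let h : (0,1) → (0,∞) be the function assigning to each accuracy α the unique optimal weight ω = h(α) solving α ω = ((1−α)/(2^{k/2−1}Γ(k/2))) ∫_ω^∞ (u−ω) u^{k−1} e^{−u²/2} du. Then h is differentiable and h'(α) = − ω² 2^{k/2−1} Γ(k/2) / ((1−α)² ∫_ω^∞ u^k e^{−u²/2} du) evaluated at ω = h(α). -/

import Mathlib

/-!
Write `F_n(ω) = ∫_ω^∞ uⁿ e^{-u²/2} du` and `G(ω) = ∫_ω^∞ (u - ω) u^{k-1} e^{-u²/2} du
= F_k(ω) - ω F_{k-1}(ω)`, so that `G' = -F_{k-1}`. With `C = 2^{k/2-1} Γ(k/2)` the defining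
equation says `α = φ(h α)` for `φ(ω) = G(ω) / (Cω + G(ω))`, and
`φ'(ω) = -C F_k(ω) / (Cω + G(ω))² < 0`. Hence `h` is the inverse of a strictly decreasing
differentiable function, so it is continuous and differentiable with `h' = 1 / φ'(h α)`;
substituting `1 - α = Cω / (Cω + G(ω))` gives the stated formula.
-/

open MeasureTheory Set Real Filter Topology

lemma hasDerivAt_of_strictAntiOn_rightInverse {φ φ' h : ℝ → ℝ} {s t : Set ℝ}
    (hs : IsOpen s) (ht : IsOpen t) (hφ : StrictAntiOn φ s)
    (hφ' : ∀ x ∈ s, HasDerivAt φ (φ' x) x) (hmaps : MapsTo h t s)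
    (hinv : ∀ β ∈ t, φ (h β) = β) {α : ℝ} (hα : α ∈ t) (hne : φ' (h α) ≠ 0) :
    HasDerivAt h (φ' (h α))⁻¹ α := by
  have hanti : AntitoneOn h t := fun β₁ h₁ β₂ h₂ hle =>
    (hφ.le_iff_ge (hmaps h₁) (hmaps h₂)).1 (by rwa [hinv β₁ h₁, hinv β₂ h₂])
  have himage : s ∩ φ ⁻¹' t ⊆ h '' t := fun x hx =>
    ⟨φ x, hx.2, hφ.injOn (hmaps hx.2) hx.1 (hinv _ hx.2)⟩
  have hnhds : s ∩ φ ⁻¹' t ∈ 𝓝 (h α) :=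
    inter_mem (hs.mem_nhds (hmaps hα)) <| (hφ' _ (hmaps hα)).continuousAt.preimage_mem_nhds
      (ht.mem_nhds (by rwa [hinv α hα]))
  have hcont : ContinuousAt h α :=
    continuousAt_of_monotoneOn_of_image_mem_nhds (β := ℝᵒᵈ) hanti (ht.mem_nhds hα)
      (mem_of_superset hnhds himage)
  exact (hφ' _ (hmaps hα)).of_local_left_inverse hcont hne
    (eventually_of_mem (ht.mem_nhds hα) hinv)

noncomputable def gaussTailMoment (n : ℕ) (x : ℝ) : ℝ :=
  ∫ u in Ici x, u ^ n * exp (-u ^ 2 / 2)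

lemma integrableOn_pow_mul_exp_neg_sq_div_two (n : ℕ) {x : ℝ} (hx : 0 ≤ x) :
    IntegrableOn (fun u : ℝ => u ^ n * exp (-u ^ 2 / 2)) (Ioi x) := by
  have hrpow := integrableOn_rpow_mul_exp_neg_mul_sq (b := 1 / 2) (by norm_num)
    (s := n) (by linarith [n.cast_nonneg (α := ℝ)])
  refine (hrpow.congr_fun (fun u _ => ?_) measurableSet_Ioi).mono_set (Ioi_subset_Ioi hx)
  rw [rpow_natCast]
  ring_nf

lemma hasDerivAt_gaussTailMoment (n : ℕ) {x : ℝ} (hx : 0 < x) :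
    HasDerivAt (gaussTailMoment n) (-(x ^ n * exp (-x ^ 2 / 2))) x := by
  have hcont : Continuous (fun u : ℝ => u ^ n * exp (-u ^ 2 / 2)) := by fun_prop
  have hev : (fun y => gaussTailMoment n x - ∫ u in x..y, u ^ n * exp (-u ^ 2 / 2))
      =ᶠ[𝓝 x] gaussTailMoment n := by
    filter_upwards [Ioi_mem_nhds hx] with y hy
    simp only [gaussTailMoment, integral_Ici_eq_integral_Ioi]
    rw [← intervalIntegral.integral_Ioi_sub_Ioi' (integrableOn_pow_mul_exp_neg_sq_div_two n hx.le)
      (integrableOn_pow_mul_exp_neg_sq_div_two n (le_of_lt hy)), sub_sub_cancel]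
  exact ((intervalIntegral.integral_hasDerivAt_right (hcont.intervalIntegrable _ _)
    (hcont.stronglyMeasurableAtFilter _ _) hcont.continuousAt).const_sub _).congr_of_eventuallyEq
    hev.symm

lemma gaussTailMoment_pos (n : ℕ) {x : ℝ} (hx : 0 ≤ x) : 0 < gaussTailMoment n x := by
  have hpos : ∀ u ∈ Ioi x, 0 < u ^ n * exp (-u ^ 2 / 2) := fun u hu =>
    mul_pos (pow_pos (hx.trans_lt hu) n) (exp_pos _)
  rw [gaussTailMoment, integral_Ici_eq_integral_Ioi, setIntegral_pos_iff_support_of_nonneg_ae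
    ((ae_restrict_iff' measurableSet_Ioi).2 (ae_of_all _ fun u hu => (hpos u hu).le))
    (integrableOn_pow_mul_exp_neg_sq_div_two n hx)]
  calc (0 : ENNReal) < volume (Ioi x) := by simp
    _ ≤ _ := measure_mono fun u (hu : u ∈ Ioi x) => show u ∈ _ ∩ _ from ⟨(hpos u hu).ne', hu⟩

noncomputable def gaussExcess (m : ℕ) (x : ℝ) : ℝ :=
  gaussTailMoment (m + 1) x - x * gaussTailMoment m x

lemma integral_sub_mul_pow_mul_exp_eq_gaussExcess (m : ℕ) {x : ℝ} (hx : 0 ≤ x) :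
    ∫ u in Ici x, (u - x) * u ^ m * exp (-u ^ 2 / 2) = gaussExcess m x := by
  have hsplit : ∀ u : ℝ, (u - x) * u ^ m * exp (-u ^ 2 / 2)
      = u ^ (m + 1) * exp (-u ^ 2 / 2) - x * (u ^ m * exp (-u ^ 2 / 2)) := fun u => by ring
  simp only [gaussExcess, gaussTailMoment, integral_Ici_eq_integral_Ioi, hsplit]
  rw [integral_sub (integrableOn_pow_mul_exp_neg_sq_div_two _ hx)
    ((integrableOn_pow_mul_exp_neg_sq_div_two _ hx).const_mul x), integral_const_mul]

lemma gaussExcess_nonneg (m : ℕ) {x : ℝ} (hx : 0 ≤ x) : 0 ≤ gaussExcess m x := by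
  rw [← integral_sub_mul_pow_mul_exp_eq_gaussExcess m hx]
  refine setIntegral_nonneg measurableSet_Ici fun u (hu : x ≤ u) => ?_
  have := pow_nonneg (hx.trans hu) m
  have := exp_pos (-u ^ 2 / 2)
  have : 0 ≤ u - x := sub_nonneg.2 hu
  positivity

lemma hasDerivAt_gaussExcess (m : ℕ) {x : ℝ} (hx : 0 < x) :
    HasDerivAt (gaussExcess m) (-gaussTailMoment m x) x := by
  refine ((hasDerivAt_gaussTailMoment (m + 1) hx).sub
    ((hasDerivAt_id x).mul (hasDerivAt_gaussTailMoment m hx))).congr_deriv ?_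
  simp only [id_eq]
  ring

/-- With `C = 2^{k/2-1} Γ(k/2)` and `k = m + 1`, the defining equation
`α ω = (1 - α) / C * gaussExcess m ω` is equivalent to `α = accuracyOfWeight C m ω`. -/
noncomputable def accuracyOfWeight (C : ℝ) (m : ℕ) (ω : ℝ) : ℝ :=
  gaussExcess m ω / (C * ω + gaussExcess m ω)

section

variable {C : ℝ} (hC : 0 < C) {m : ℕ}
include hC

lemma accuracyOfWeight_denom_pos {ω : ℝ} (hω : 0 < ω) : 0 < C * ω + gaussExcess m ω :=
  add_pos_of_pos_of_nonneg (mul_pos hC hω) (gaussExcess_nonneg m hω.le)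

lemma hasDerivAt_accuracyOfWeight {ω : ℝ} (hω : 0 < ω) :
    HasDerivAt (accuracyOfWeight C m)
      (-(C * gaussTailMoment (m + 1) ω) / (C * ω + gaussExcess m ω) ^ 2) ω := by
  have hG := hasDerivAt_gaussExcess m hω
  have hD := (accuracyOfWeight_denom_pos hC (m := m) hω).ne'
  refine (hG.div (((hasDerivAt_id ω).const_mul C).add hG) hD).congr_deriv ?_
  simp only [Pi.add_apply, id_eq, gaussExcess] at hD ⊢
  field_simp
  ring

lemma accuracyOfWeight_deriv_neg {ω : ℝ} (hω : 0 < ω) :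
    -(C * gaussTailMoment (m + 1) ω) / (C * ω + gaussExcess m ω) ^ 2 < 0 :=
  div_neg_of_neg_of_pos (neg_neg_of_pos (mul_pos hC (gaussTailMoment_pos (m + 1) hω.le)))
    (pow_pos (accuracyOfWeight_denom_pos hC hω) 2)

lemma accuracyOfWeight_strictAntiOn : StrictAntiOn (accuracyOfWeight C m) (Ioi 0) := by
  refine strictAntiOn_of_hasDerivWithinAt_neg (convex_Ioi 0)
    (f' := fun ω => -(C * gaussTailMoment (m + 1) ω) / (C * ω + gaussExcess m ω) ^ 2)
    (fun ω hω => (hasDerivAt_accuracyOfWeight hC hω).continuousAt.continuousWithinAt)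
    (fun ω hω => ?_) (fun ω hω => ?_) <;> rw [interior_Ioi] at hω
  · exact (hasDerivAt_accuracyOfWeight hC hω).hasDerivWithinAt
  · exact accuracyOfWeight_deriv_neg hC hω

lemma one_sub_accuracyOfWeight {ω : ℝ} (hω : 0 < ω) :
    1 - accuracyOfWeight C m ω = C * ω / (C * ω + gaussExcess m ω) := by
  rw [accuracyOfWeight, one_sub_div (accuracyOfWeight_denom_pos hC hω).ne', add_sub_cancel_right]

lemma accuracyOfWeight_eq {α ω : ℝ} (hω : 0 < ω)
    (heq : α * ω = (1 - α) / C * gaussExcess m ω) : accuracyOfWeight C m ω = α := by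
  rw [accuracyOfWeight, div_eq_iff (accuracyOfWeight_denom_pos hC hω).ne']
  field_simp at heq
  linear_combination -heq

end

theorem optimal_weight_derivative (k : ℕ) (hk : 1 ≤ k) (h : ℝ → ℝ)
    (hpos : ∀ α ∈ Set.Ioo (0:ℝ) 1, 0 < h α)
    (heq : ∀ α ∈ Set.Ioo (0:ℝ) 1,
      α * h α = ((1 - α) / (2 ^ ((k : ℝ) / 2 - 1) * Real.Gamma ((k : ℝ) / 2))) *
        ∫ u in Set.Ici (h α), (u - h α) * u ^ (k - 1) * Real.exp (-u ^ 2 / 2)) :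
    ∀ α ∈ Set.Ioo (0:ℝ) 1,
      HasDerivAt h
        (-(h α ^ 2 * 2 ^ ((k : ℝ) / 2 - 1) * Real.Gamma ((k : ℝ) / 2)) /
          ((1 - α) ^ 2 * ∫ u in Set.Ici (h α), u ^ k * Real.exp (-u ^ 2 / 2))) α := by
  intro α hα
  obtain ⟨m, rfl⟩ : ∃ m, k = m + 1 := ⟨k - 1, by omega⟩
  rw [mul_assoc (h α ^ 2)]
  set C : ℝ := 2 ^ ((↑(m + 1) : ℝ) / 2 - 1) * Gamma ((↑(m + 1) : ℝ) / 2)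
  have hC : 0 < C := mul_pos (rpow_pos_of_pos two_pos _) (Gamma_pos_of_pos (by positivity))
  have hinv : ∀ β ∈ Ioo (0 : ℝ) 1, accuracyOfWeight C m (h β) = β := fun β hβ =>
    accuracyOfWeight_eq hC (hpos β hβ) <| by
      simpa [integral_sub_mul_pow_mul_exp_eq_gaussExcess m (hpos β hβ).le] using heq β hβ
  have hω : 0 < h α := hpos α hα
  have hderiv := hasDerivAt_of_strictAntiOn_rightInverse isOpen_Ioi isOpen_Ioo
    (accuracyOfWeight_strictAntiOn hC) (fun ω hω => hasDerivAt_accuracyOfWeight hC hω)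
    hpos hinv hα (accuracyOfWeight_deriv_neg hC hω).ne
  have hα' : 1 - α = C * h α / (C * h α + gaussExcess m (h α)) := by
    rw [← one_sub_accuracyOfWeight hC hω, hinv α hα]
  have hD := (accuracyOfWeight_denom_pos hC (m := m) hω).ne'
  have hF := (gaussTailMoment_pos (m + 1) hω.le).ne'
  convert hderiv using 1
  rw [hα', ← gaussTailMoment]
  field_simp
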